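/- arXiv:1802.01057 — 3 statements merged into one kernel-verified Lean document; each statement's English description precedes it below -/
import Mathlib

section
/- Let n ≥ 1, α > 0, N > α and A > 0, and let ψ : ℝⁿ → ℂ be a measurable function with |ψ(y)| ≤ A (1+|y|)^{−N} for all y ∈ ℝⁿ. Then there is a constant C > 0, depending only on n, α and N, such that for every finite Borel measure μ on ℝⁿ with [μ]_α < ∞, every R > 0 and every x ∈ ℝⁿ one has |∫_{ℝⁿ} Rⁿ ψ(R(x−y)) dμ(y)| ≤ C A [μ]_α R^{n−α}. -/
open MeasureTheory Real Metric
open scoped ENNReal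

noncomputable section

abbrev E (n : ℕ) : Type := EuclideanSpace ℝ (Fin n)

/-- The Frostman constant `[μ]_α = sup_{x,r>0} μ(B(x,r))/r^α`. -/
def frostman {d : ℕ} (μ : Measure (E d)) (α : ℝ) : ℝ≥0∞ :=
  ⨆ (x : E d) (r : ℝ) (_ : 0 < r), μ (Metric.ball x r) / ENNReal.ofReal (r ^ α)

/-- a pointwise bound, `|R^n ψ(R·) * μ(x)| ≲ A [μ]_α R^{n-α}`, for rapidly
decaying `ψ`, with constant depending only on `n`, `α` and `N`. -/
theorem pointwise_mollified_measure_bound (n : ℕ) (hn : 1 ≤ n) (α N : ℝ)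
    (hα : 0 < α) (hN : α < N) :
    ∃ C : ℝ, 0 < C ∧
      ∀ (A : ℝ), 0 < A → ∀ (ψ : E n → ℂ), Measurable ψ →
        (∀ y, ‖ψ y‖ ≤ A * (1 + ‖y‖) ^ (-N)) →
        ∀ (μ : Measure (E n)), IsFiniteMeasure μ → frostman μ α < ⊤ →
          ∀ R : ℝ, 0 < R → ∀ x : E n,
            ‖∫ y, ((R : ℂ) ^ (n : ℕ)) * ψ (R • (x - y)) ∂μ‖ ≤
              C * A * (frostman μ α).toReal * R ^ ((n : ℝ) - α) := by
  have hN0 : 0 < N := hα.trans hN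
  set s : ℝ := α / N with hs_def
  have hs0 : 0 < s := div_pos hα hN0
  have hs1 : s < 1 := (div_lt_one hN0).2 hN
  set I : ℝ := ∫ t in Set.Ioc (0:ℝ) 1, t ^ (-s) with hI_def
  have hInt : MeasureTheory.IntegrableOn (fun t : ℝ => t ^ (-s)) (Set.Ioc 0 1) := by
    have h := intervalIntegral.intervalIntegrable_rpow' (a := (0:ℝ)) (b := 1)
      (by linarith : (-1:ℝ) < -s)
    exact h.1
  have hI_nonneg : 0 ≤ I := by
    apply MeasureTheory.setIntegral_nonneg measurableSet_Ioc
    intro t ht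
    exact Real.rpow_nonneg ht.1.le _
  refine ⟨max I 1, lt_of_lt_of_le one_pos (le_max_right _ _), ?_⟩
  intro A hA ψ hψ hψle μ hμfin hμK R hR x
  set K : ℝ≥0∞ := frostman μ α with hK_def
  have hKtop : K ≠ ⊤ := hμK.ne
  have hK : ∀ (z : E n) (r : ℝ), 0 < r →
      μ (Metric.ball z r) ≤ K * ENNReal.ofReal (r ^ α) := by
    intro z r hr
    have h1 : μ (Metric.ball z r) / ENNReal.ofReal (r ^ α) ≤ K := by
      refine le_iSup_of_le z ?_
      refine le_iSup_of_le r ?_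
      exact le_iSup_of_le hr le_rfl
    have h2 : ENNReal.ofReal (r ^ α) ≠ 0 := by
      simp only [ne_eq, ENNReal.ofReal_eq_zero, not_le]
      positivity
    exact (ENNReal.div_le_iff h2 ENNReal.ofReal_ne_top).1 h1
  set g : E n → ℝ := fun y => (1 + R * ‖x - y‖) ^ (-N) with hg_def
  have hg_base : ∀ y : E n, (1:ℝ) ≤ 1 + R * ‖x - y‖ := by
    intro y
    nlinarith [norm_nonneg (x - y), hR]
  have hg_nn : ∀ y, 0 ≤ g y := fun y =>
    Real.rpow_nonneg (by nlinarith [hg_base y]) _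
  have hg_le_one : ∀ y, g y ≤ 1 := fun y => by
    simpa using Real.rpow_le_rpow_of_nonpos one_pos (hg_base y) (by linarith : -N ≤ 0)
  have hg_cont : Continuous g := by
    apply Continuous.rpow_const
    · exact continuous_const.add (continuous_const.mul
        ((continuous_const.sub continuous_id).norm))
    · intro y; left; have := hg_base y; intro h; rw [h] at this; linarith
  have hg_mble : Measurable g := hg_cont.measurable
  -- layer cake bound
  have key : ∫⁻ y, ENNReal.ofReal (g y) ∂μ ≤
      K * ENNReal.ofReal (R ^ (-α)) * ENNReal.ofReal I := by
    rw [lintegral_eq_lintegral_meas_lt μ (Filter.Eventually.of_forall hg_nn)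
      hg_mble.aemeasurable]
    have hmono : ∫⁻ t in Set.Ioi (0:ℝ), μ {y | t < g y} ≤
        ∫⁻ t in Set.Ioi (0:ℝ),
          Set.indicator (Set.Ioc 0 1)
            (fun t => (K * ENNReal.ofReal (R ^ (-α))) * ENNReal.ofReal (t ^ (-s))) t := by
      refine setLIntegral_mono' measurableSet_Ioi ?_
      intro t ht
      rcases le_or_gt 1 t with h1 | h1
      · have hempty : {y | t < g y} = ∅ := by
          ext y
          simp only [Set.mem_setOf_eq, Set.mem_empty_iff_false, iff_false, not_lt]
          exact (hg_le_one y).trans h1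
        simp [hempty]
      · rw [Set.indicator_of_mem (Set.mem_Ioc.2 ⟨Set.mem_Ioi.1 ht, h1.le⟩)]
        have ht0 : (0:ℝ) < t := ht
        have hexp : (-1/N : ℝ) < 0 := by
          rw [neg_div]
          simp only [Left.neg_neg_iff]
          positivity
        have htN : 1 < t ^ (-1/N : ℝ) := by
          have h := Real.rpow_lt_rpow_of_neg ht0 h1 hexp
          simpa using h
        set r : ℝ := (t ^ (-1/N : ℝ) - 1) / R with hr_def
        have hr0 : 0 < r := div_pos (by linarith) hR
        have hsub : {y | t < g y} ⊆ Metric.ball x r := by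
          intro y hy
          simp only [Set.mem_setOf_eq] at hy
          have hb1 : (1:ℝ) ≤ 1 + R * ‖x - y‖ := hg_base y
          have hb0 : (0:ℝ) < 1 + R * ‖x - y‖ := by linarith
          have h2 : (g y) ^ (-1/N : ℝ) < t ^ (-1/N : ℝ) :=
            Real.rpow_lt_rpow_of_neg ht0 hy hexp
          have h3 : (g y) ^ (-1/N : ℝ) = 1 + R * ‖x - y‖ := by
            rw [hg_def]
            rw [← Real.rpow_mul hb0.le]
            have : (-N) * (-1/N) = 1 := by field_simp
            rw [this, Real.rpow_one]
          rw [h3] at h2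
          have h4 : ‖x - y‖ < r := by
            rw [hr_def, lt_div_iff₀ hR]
            nlinarith
          rw [Metric.mem_ball, dist_eq_norm, ← norm_neg]
          simpa [neg_sub] using h4
        have h5 : μ {y | t < g y} ≤ K * ENNReal.ofReal (r ^ α) :=
          le_trans (measure_mono hsub) (hK x r hr0)
        refine h5.trans ?_
        rw [mul_assoc]
        refine mul_le_mul_right ?_ K
        rw [← ENNReal.ofReal_mul (by positivity : (0:ℝ) ≤ R ^ (-α))]
        refine ENNReal.ofReal_le_ofReal ?_
        have h6 : r ≤ t ^ (-1/N : ℝ) / R := by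
          rw [hr_def]
          gcongr
          linarith
        have h7 : r ^ α ≤ (t ^ (-1/N : ℝ) / R) ^ α :=
          Real.rpow_le_rpow hr0.le h6 hα.le
        refine h7.trans_eq ?_
        rw [Real.div_rpow (by positivity) hR.le, ← Real.rpow_mul ht0.le]
        have : (-1/N) * α = -s := by rw [hs_def]; ring
        rw [this, Real.rpow_neg hR.le, div_eq_mul_inv, mul_comm]
    refine hmono.trans ?_
    rw [lintegral_indicator measurableSet_Ioc]
    rw [Measure.restrict_restrict measurableSet_Ioc,
      Set.inter_eq_self_of_subset_left Set.Ioc_subset_Ioi_self]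
    rw [lintegral_const_mul' _ _
      (ENNReal.mul_ne_top hKtop ENNReal.ofReal_ne_top)]
    have h8 : ∫⁻ t in Set.Ioc (0:ℝ) 1, ENNReal.ofReal (t ^ (-s)) = ENNReal.ofReal I := by
      rw [hI_def]
      rw [MeasureTheory.ofReal_integral_eq_lintegral_ofReal hInt ?_]
      filter_upwards [ae_restrict_mem measurableSet_Ioc] with t ht
      exact Real.rpow_nonneg ht.1.le _
    rw [h8]
  -- final assembly
  have hpt : ∀ y : E n, ENNReal.ofReal ‖((R : ℂ) ^ (n : ℕ)) * ψ (R • (x - y))‖ ≤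
      ENNReal.ofReal (R ^ (n : ℕ) * A) * ENNReal.ofReal (g y) := by
    intro y
    rw [← ENNReal.ofReal_mul (by positivity : (0:ℝ) ≤ R ^ (n:ℕ) * A)]
    refine ENNReal.ofReal_le_ofReal ?_
    have hnorm : ‖R • (x - y)‖ = R * ‖x - y‖ := by
      rw [norm_smul, Real.norm_of_nonneg hR.le]
    calc ‖((R : ℂ) ^ (n : ℕ)) * ψ (R • (x - y))‖
        = R ^ (n:ℕ) * ‖ψ (R • (x - y))‖ := by
          rw [norm_mul, norm_pow, Complex.norm_real, Real.norm_of_nonneg hR.le]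
      _ ≤ R ^ (n:ℕ) * (A * (1 + ‖R • (x - y)‖) ^ (-N)) := by
          apply mul_le_mul_of_nonneg_left (hψle _) (by positivity)
      _ = R ^ (n:ℕ) * A * g y := by
          rw [hnorm, hg_def]; ring
  have hbound : ∫⁻ y, ENNReal.ofReal ‖((R : ℂ) ^ (n : ℕ)) * ψ (R • (x - y))‖ ∂μ ≤
      ENNReal.ofReal (R ^ (n : ℕ) * A) * (K * ENNReal.ofReal (R ^ (-α)) * ENNReal.ofReal I) := by
    calc ∫⁻ y, ENNReal.ofReal ‖((R : ℂ) ^ (n : ℕ)) * ψ (R • (x - y))‖ ∂μ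
        ≤ ∫⁻ y, ENNReal.ofReal (R ^ (n : ℕ) * A) * ENNReal.ofReal (g y) ∂μ :=
          lintegral_mono hpt
      _ = ENNReal.ofReal (R ^ (n : ℕ) * A) * ∫⁻ y, ENNReal.ofReal (g y) ∂μ :=
          lintegral_const_mul' _ _ ENNReal.ofReal_ne_top
      _ ≤ _ := mul_le_mul_right key _
  have hfin : ENNReal.ofReal (R ^ (n : ℕ) * A) *
      (K * ENNReal.ofReal (R ^ (-α)) * ENNReal.ofReal I) ≠ ⊤ := by
    apply ENNReal.mul_ne_top ENNReal.ofReal_ne_top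
    exact ENNReal.mul_ne_top (ENNReal.mul_ne_top hKtop ENNReal.ofReal_ne_top)
      ENNReal.ofReal_ne_top
  calc ‖∫ y, ((R : ℂ) ^ (n : ℕ)) * ψ (R • (x - y)) ∂μ‖
      ≤ (∫⁻ y, ENNReal.ofReal ‖((R : ℂ) ^ (n : ℕ)) * ψ (R • (x - y))‖ ∂μ).toReal :=
        norm_integral_le_lintegral_norm _
    _ ≤ (ENNReal.ofReal (R ^ (n : ℕ) * A) *
          (K * ENNReal.ofReal (R ^ (-α)) * ENNReal.ofReal I)).toReal :=
        ENNReal.toReal_mono hfin hbound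
    _ = (R ^ (n : ℕ) * A) * (K.toReal * R ^ (-α) * I) := by
        rw [ENNReal.toReal_mul, ENNReal.toReal_mul, ENNReal.toReal_mul,
          ENNReal.toReal_ofReal (by positivity), ENNReal.toReal_ofReal (by positivity),
          ENNReal.toReal_ofReal hI_nonneg]
    _ ≤ max I 1 * A * K.toReal * R ^ ((n : ℝ) - α) := by
        have hRpow : R ^ (n : ℕ) * R ^ (-α) = R ^ ((n : ℝ) - α) := by
          rw [← Real.rpow_natCast R n, ← Real.rpow_add hR]
          ring_nf
        have hEq : (R ^ (n : ℕ) * A) * (K.toReal * R ^ (-α) * I) =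
            I * (A * K.toReal * R ^ ((n : ℝ) - α)) := by
          rw [← hRpow]; ring
        rw [hEq]
        have : max I 1 * A * K.toReal * R ^ ((n : ℝ) - α) =
            max I 1 * (A * K.toReal * R ^ ((n : ℝ) - α)) := by ring
        rw [this]
        apply mul_le_mul_of_nonneg_right (le_max_left _ _)
        have : (0:ℝ) ≤ K.toReal := ENNReal.toReal_nonneg
        positivity
end
end

section
/- Let n ≥ 1, α > 0, N > α and A > 0, and let ψ : ℝⁿ → ℂ be a measurable function with |ψ(y)| ≤ A (1+|y|)^{−N} for all y ∈ ℝⁿ and ψ ∈ L¹(ℝⁿ). Then there is a constant C > 0, depending only on n, α, N and ‖ψ‖_{L¹}, such that for every finite Borel measure μ on ℝⁿ with [μ]_α < ∞ and every R > 0 the function g(x) := ∫_{ℝⁿ} Rⁿ ψ(R(x−y)) dμ(y) satisfies ‖g‖_{L²(ℝⁿ)} ≤ C A^{1/2} R^{(n−α)/2} μ(ℝⁿ)^{1/2} [μ]_α^{1/2}. -/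
open MeasureTheory Real Metric
open scoped ENNReal

noncomputable section

/-!
Write `g = ψ_R * μ` with `ψ_R x = Rⁿ ψ (R x)`, so that `‖g‖₂² ≤ ‖g‖_∞ ‖g‖₁`. Since
`‖ψ_R‖₁ = ‖ψ‖₁`, Tonelli gives `‖g‖₁ ≤ ‖ψ‖₁ μ(ℝⁿ)`. The decay of `ψ` gives
`|g x| ≤ A Rⁿ ∫ (1 + R |x - y|)^(-N) dμ(y)`, and in the layer-cake formula for this integral
the superlevel set at height `t ∈ (0, 1]` is a ball of radius `t^(-1/N) / R`, of measure at most
`[μ]_α R^(-α) t^(-α/N)`. As `α < N` this is integrable on `(0, 1]`, whence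
`‖g‖_∞ ≤ N / (N - α) · A [μ]_α R^(n-α)`.
-/

lemma measure_ball_le_frostman_mul {d : ℕ} (μ : Measure (E d)) (α : ℝ) (x : E d) {r : ℝ}
    (hr : 0 < r) : μ (ball x r) ≤ frostman μ α * ENNReal.ofReal (r ^ α) := by
  have hratio : μ (ball x r) / ENNReal.ofReal (r ^ α) ≤ frostman μ α :=
    le_iSup_of_le x (le_iSup_of_le r (le_iSup_of_le hr le_rfl))
  exact ENNReal.div_le_iff (by simpa using rpow_pos_of_pos hr α) ENNReal.ofReal_ne_top |>.1 hratio

lemma lintegral_Ioc_zero_one_rpow_neg {s : ℝ} (hs : s < 1) :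
    ∫⁻ t in Set.Ioc (0 : ℝ) 1, ENNReal.ofReal (t ^ (-s)) = ENNReal.ofReal (1 - s)⁻¹ := by
  have hint : IntegrableOn (fun t : ℝ ↦ t ^ (-s)) (Set.Ioc 0 1) := by
    rw [← intervalIntegrable_iff_integrableOn_Ioc_of_le zero_le_one]
    exact intervalIntegral.intervalIntegrable_rpow' (by linarith)
  rw [← ofReal_integral_eq_lintegral_ofReal hint
    ((ae_restrict_iff' measurableSet_Ioc).2 (ae_of_all _ fun t ht ↦ rpow_nonneg ht.1.le _)),
    ← intervalIntegral.integral_of_le zero_le_one, integral_rpow (Or.inl (by linarith)),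
    one_rpow, zero_rpow (by linarith), neg_add_eq_sub, sub_zero, one_div]

lemma eLpNorm_two_le_rpow_mul {Ω F : Type*} [MeasurableSpace Ω] [NormedAddCommGroup F]
    {ν : Measure Ω} {f : Ω → F} {M I : ℝ≥0∞} (hM : ∀ᵐ x ∂ν, ‖f x‖ₑ ≤ M) (hM_ne_top : M ≠ ⊤)
    (hI : ∫⁻ x, ‖f x‖ₑ ∂ν ≤ I) : eLpNorm f 2 ν ≤ (M * I) ^ (1 / 2 : ℝ) := by
  rw [eLpNorm_eq_lintegral_rpow_enorm_toReal two_ne_zero ENNReal.ofNat_ne_top, ENNReal.toReal_ofNat]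
  gcongr
  calc ∫⁻ x, ‖f x‖ₑ ^ (2 : ℝ) ∂ν ≤ ∫⁻ x, M * ‖f x‖ₑ ∂ν := by
        refine lintegral_mono_ae (hM.mono fun x hx ↦ ?_)
        rw [ENNReal.rpow_two, sq]
        gcongr
    _ ≤ M * I := by
        rw [lintegral_const_mul' _ _ hM_ne_top]
        gcongr

section LayerCake

variable {X : Type*} [PseudoMetricSpace X]

lemma setOf_lt_one_add_mul_dist_rpow_neg_subset_ball {N R t : ℝ} (hN : 0 < N) (hR : 0 < R)
    (ht : 0 < t) (x : X) :
    {y | t < (1 + R * dist x y) ^ (-N)} ⊆ ball x (t ^ (-N⁻¹) / R) := by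
  intro y hy
  have hpos : 0 < 1 + R * dist x y := by positivity
  have hlt : 1 + R * dist x y < t ^ (-N⁻¹) := by
    simpa [← rpow_mul hpos.le, hN.ne'] using
      rpow_lt_rpow_of_neg ht hy (neg_lt_zero.2 (inv_pos.2 hN))
  rw [mem_ball', lt_div_iff₀ hR]
  linarith

variable [MeasurableSpace X] [OpensMeasurableSpace X]

lemma lintegral_one_add_mul_dist_rpow_neg_le (μ : Measure X) {α N R : ℝ} {F : ℝ≥0∞}
    (hN : 0 < N) (hαN : α < N) (hR : 0 < R) {x : X}
    (hball : ∀ r, 0 < r → μ (ball x r) ≤ F * ENNReal.ofReal (r ^ α)) :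
    ∫⁻ y, ENNReal.ofReal ((1 + R * dist x y) ^ (-N)) ∂μ ≤
      F * ENNReal.ofReal (N / (N - α) * R ^ (-α)) := by
  set f : X → ℝ := fun y ↦ (1 + R * dist x y) ^ (-N)
  have hlevel : ∀ t ∈ Set.Ioc (0 : ℝ) 1, μ {y | t < f y} ≤
      F * ENNReal.ofReal (R ^ (-α)) * ENNReal.ofReal (t ^ (-(α / N))) := by
    intro t ht
    calc μ {y | t < f y} ≤ μ (ball x (t ^ (-N⁻¹) / R)) :=
          measure_mono (setOf_lt_one_add_mul_dist_rpow_neg_subset_ball hN hR ht.1 x)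
      _ ≤ F * ENNReal.ofReal ((t ^ (-N⁻¹) / R) ^ α) := hball _ (by have := ht.1; positivity)
      _ = _ := by
        rw [mul_assoc, ← ENNReal.ofReal_mul (by positivity), div_rpow (by have := ht.1; positivity)
          hR.le, ← rpow_mul ht.1.le, rpow_neg hR.le]
        ring_nf
  have hlevel_empty : ∀ t ∈ Set.Ioi (1 : ℝ), μ {y | t < f y} = 0 := by
    intro t ht
    convert measure_empty (μ := μ)
    refine Set.eq_empty_of_forall_notMem fun y hy ↦ ?_
    have : f y ≤ 1 := rpow_le_one_of_one_le_of_nonpos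
      (le_add_of_nonneg_right (by positivity)) (by linarith)
    exact absurd (hy.trans_le this) (not_lt.2 (le_of_lt ht))
  rw [lintegral_eq_lintegral_meas_lt μ (ae_of_all _ fun y ↦ by positivity) (by fun_prop),
    ← Set.Ioc_union_Ioi_eq_Ioi zero_le_one]
  calc ∫⁻ t in Set.Ioc 0 1 ∪ Set.Ioi 1, μ {y | t < f y}
      ≤ (∫⁻ t in Set.Ioc 0 1, μ {y | t < f y}) + ∫⁻ t in Set.Ioi 1, μ {y | t < f y} :=
        lintegral_union_le _ _ _
    _ ≤ (∫⁻ t in Set.Ioc 0 1, F * ENNReal.ofReal (R ^ (-α)) * ENNReal.ofReal (t ^ (-(α / N)))) +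
          0 :=
        add_le_add (setLIntegral_mono' measurableSet_Ioc hlevel)
          ((setLIntegral_congr_fun measurableSet_Ioi hlevel_empty).trans_le (by simp))
    _ = F * ENNReal.ofReal (N / (N - α) * R ^ (-α)) := by
        have hratio : (1 - α / N)⁻¹ = N / (N - α) := by field_simp
        rw [add_zero, lintegral_const_mul _ (by fun_prop),
          lintegral_Ioc_zero_one_rpow_neg ((div_lt_one hN).2 hαN), hratio, mul_assoc,
          ← ENNReal.ofReal_mul (by positivity), mul_comm (R ^ (-α))]

end LayerCake

section DilatedConvolution

variable {V : Type*} [NormedAddCommGroup V] [NormedSpace ℝ V] [MeasurableSpace V]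

/-- `ψ_R * μ`, where `ψ_R x = R ^ k * ψ (R • x)`. -/
def dilatedConvolution (ψ : V → ℂ) (k : ℕ) (R : ℝ) (μ : Measure V) (x : V) : ℂ :=
  ∫ y, (R : ℂ) ^ k * ψ (R • (x - y)) ∂μ

lemma enorm_dilatedConvolution_le (ψ : V → ℂ) (k : ℕ) {R : ℝ} (hR : 0 ≤ R) (μ : Measure V)
    (x : V) : ‖dilatedConvolution ψ k R μ x‖ₑ ≤
      ENNReal.ofReal (R ^ k) * ∫⁻ y, ‖ψ (R • (x - y))‖ₑ ∂μ := by
  refine (enorm_integral_le_lintegral_enorm _).trans_eq ?_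
  simp_rw [enorm_mul, enorm_pow, ← ofReal_norm, Complex.norm_real, norm_of_nonneg hR,
    ← ENNReal.ofReal_pow hR]
  exact lintegral_const_mul' _ _ ENNReal.ofReal_ne_top

section Decay

variable [OpensMeasurableSpace V]

lemma enorm_dilatedConvolution_le_of_decay {ψ : V → ℂ} {α N A : ℝ} (hN : 0 < N) (hαN : α < N)
    (hdecay : ∀ y, ‖ψ y‖ ≤ A * (1 + ‖y‖) ^ (-N)) (k : ℕ) {R : ℝ} (hR : 0 < R)
    {μ : Measure V} {F : ℝ≥0∞}
    (hball : ∀ x r, 0 < r → μ (ball x r) ≤ F * ENNReal.ofReal (r ^ α)) (x : V) :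
    ‖dilatedConvolution ψ k R μ x‖ₑ ≤ ENNReal.ofReal (N / (N - α) * A * R ^ ((k : ℝ) - α)) * F := by
  have hdecay_at : ∀ y, ‖ψ (R • (x - y))‖ₑ ≤
      ENNReal.ofReal A * ENNReal.ofReal ((1 + R * dist x y) ^ (-N)) := fun y ↦ by
    rw [← ENNReal.ofReal_mul' (by positivity), ← ofReal_norm]
    refine ENNReal.ofReal_le_ofReal ((hdecay _).trans_eq ?_)
    rw [norm_smul, norm_of_nonneg hR.le, dist_eq_norm]
  calc ‖dilatedConvolution ψ k R μ x‖ₑ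
      ≤ ENNReal.ofReal (R ^ k) * ∫⁻ y, ‖ψ (R • (x - y))‖ₑ ∂μ :=
        enorm_dilatedConvolution_le ψ k hR.le μ x
    _ ≤ ENNReal.ofReal (R ^ k) *
          (ENNReal.ofReal A * ∫⁻ y, ENNReal.ofReal ((1 + R * dist x y) ^ (-N)) ∂μ) := by
        gcongr ENNReal.ofReal (R ^ k) * ?_
        rw [← lintegral_const_mul' _ _ ENNReal.ofReal_ne_top]
        exact lintegral_mono hdecay_at
    _ ≤ ENNReal.ofReal (R ^ k) *
          (ENNReal.ofReal A * (F * ENNReal.ofReal (N / (N - α) * R ^ (-α)))) := by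
        gcongr
        exact lintegral_one_add_mul_dist_rpow_neg_le μ hN hαN hR (hball x)
    _ = ENNReal.ofReal (N / (N - α) * A * R ^ ((k : ℝ) - α)) * F := by
        have hpow : R ^ k * R ^ (-α) = R ^ ((k : ℝ) - α) := by
          rw [← rpow_natCast, ← rpow_add hR, sub_eq_add_neg]
        rw [mul_left_comm _ F, mul_left_comm _ F, ← ENNReal.ofReal_mul' (by positivity),
          ← ENNReal.ofReal_mul (by positivity), mul_comm _ F, ← hpow]
        ring_nf

end Decay

section AddHaar

variable [BorelSpace V] [FiniteDimensional ℝ V]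

lemma lintegral_comp_smul_sub (ν : Measure V) [ν.IsAddHaarMeasure] {f : V → ℝ≥0∞}
    (hf : Measurable f) {R : ℝ} (hR : R ≠ 0) (y : V) :
    ∫⁻ x, f (R • (x - y)) ∂ν = ENNReal.ofReal |(R ^ Module.finrank ℝ V)⁻¹| * ∫⁻ x, f x ∂ν := by
  rw [lintegral_sub_right_eq_self (fun x ↦ f (R • x)) y,
    ← lintegral_map hf (measurable_const_smul R), Measure.map_addHaar_smul ν hR,
    lintegral_smul_measure, smul_eq_mul]

lemma lintegral_enorm_dilatedConvolution_le (ν : Measure V) [ν.IsAddHaarMeasure]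
    {ψ : V → ℂ} (hψ : Measurable ψ) {R : ℝ} (hR : 0 < R) (μ : Measure V) [SFinite μ] :
    ∫⁻ x, ‖dilatedConvolution ψ (Module.finrank ℝ V) R μ x‖ₑ ∂ν ≤
      (∫⁻ x, ‖ψ x‖ₑ ∂ν) * μ Set.univ := by
  set k := Module.finrank ℝ V
  have hmeas : Measurable fun p : V × V ↦ ‖ψ (R • (p.1 - p.2))‖ₑ := by fun_prop
  calc ∫⁻ x, ‖dilatedConvolution ψ k R μ x‖ₑ ∂ν
      ≤ ∫⁻ x, ENNReal.ofReal (R ^ k) * ∫⁻ y, ‖ψ (R • (x - y))‖ₑ ∂μ ∂ν :=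
        lintegral_mono fun x ↦ enorm_dilatedConvolution_le ψ k hR.le μ x
    _ = ENNReal.ofReal (R ^ k) * ∫⁻ y, ∫⁻ x, ‖ψ (R • (x - y))‖ₑ ∂ν ∂μ := by
        rw [lintegral_const_mul' _ _ ENNReal.ofReal_ne_top,
          lintegral_lintegral_swap hmeas.aemeasurable]
    _ = ENNReal.ofReal (R ^ k) *
          ∫⁻ _, ENNReal.ofReal (R ^ k)⁻¹ * ∫⁻ x, ‖ψ x‖ₑ ∂ν ∂μ := by
        congr 1
        refine lintegral_congr fun y ↦ ?_
        rw [lintegral_comp_smul_sub ν (f := fun z ↦ ‖ψ z‖ₑ) hψ.enorm hR.ne' y,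
          abs_of_pos (inv_pos.2 (pow_pos hR k))]
    _ = (∫⁻ x, ‖ψ x‖ₑ ∂ν) * μ Set.univ := by
        rw [lintegral_const, ← mul_assoc, ← mul_assoc, ← ENNReal.ofReal_mul (by positivity),
          mul_inv_cancel₀ (pow_pos hR k).ne', ENNReal.ofReal_one, one_mul]

lemma eLpNorm_dilatedConvolution_le (ν : Measure V) [ν.IsAddHaarMeasure] {ψ : V → ℂ}
    (hψ : Measurable ψ) {α N A : ℝ} (hN : 0 < N) (hαN : α < N)
    (hdecay : ∀ y, ‖ψ y‖ ≤ A * (1 + ‖y‖) ^ (-N)) {R : ℝ} (hR : 0 < R) {μ : Measure V}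
    [SFinite μ] {F : ℝ≥0∞} (hF : F ≠ ⊤)
    (hball : ∀ x r, 0 < r → μ (ball x r) ≤ F * ENNReal.ofReal (r ^ α)) :
    eLpNorm (dilatedConvolution ψ (Module.finrank ℝ V) R μ) 2 ν ≤
      (ENNReal.ofReal (N / (N - α) * A * R ^ ((Module.finrank ℝ V : ℝ) - α)) * F *
        ((∫⁻ x, ‖ψ x‖ₑ ∂ν) * μ Set.univ)) ^ (1 / 2 : ℝ) :=
  eLpNorm_two_le_rpow_mul
    (ae_of_all _ (enorm_dilatedConvolution_le_of_decay hN hαN hdecay _ hR hball))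
    (ENNReal.mul_ne_top ENNReal.ofReal_ne_top hF) (lintegral_enorm_dilatedConvolution_le ν hψ hR μ)

end AddHaar

end DilatedConvolution

theorem L2_mollified_measure_bound_general (n : ℕ) (α N A : ℝ)
    (hα : 0 < α) (hN : α < N) (ψ : E n → ℂ) (hmeas : Measurable ψ)
    (hdecay : ∀ y, ‖ψ y‖ ≤ A * (1 + ‖y‖) ^ (-N)) (hint : Integrable ψ) :
    ∃ C : ℝ, 0 < C ∧
      ∀ (μ : Measure (E n)), IsFiniteMeasure μ → frostman μ α < ⊤ →
        ∀ R : ℝ, 0 < R →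
          eLpNorm (fun x => ∫ y, ((R : ℂ) ^ (n : ℕ)) * ψ (R • (x - y)) ∂μ) 2
              (volume : Measure (E n)) ≤
            ENNReal.ofReal (C * A ^ (1/2 : ℝ) * R ^ (((n : ℝ) - α) / 2) *
              (μ Set.univ).toReal ^ (1/2 : ℝ) * (frostman μ α).toReal ^ (1/2 : ℝ)) := by
  have hN₀ : 0 < N := hα.trans hN
  have hN_sub : 0 < N - α := sub_pos.2 hN
  have hA : 0 ≤ A := (norm_nonneg _).trans (by simpa using hdecay 0)
  set L := ∫ y, ‖ψ y‖
  have hL : 0 ≤ L := integral_nonneg fun _ ↦ norm_nonneg _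
  refine ⟨(N / (N - α) * (L + 1)) ^ (1 / 2 : ℝ), by positivity, fun μ _ hF R hR ↦ ?_⟩
  have hL2 := eLpNorm_dilatedConvolution_le volume hmeas hN₀ hN hdecay hR hF.ne
    (measure_ball_le_frostman_mul μ α)
  set m := (μ Set.univ).toReal
  set f := (frostman μ α).toReal
  rw [finrank_euclideanSpace_fin, ← ofReal_integral_norm_eq_lintegral_enorm hint,
    ← ENNReal.ofReal_toReal hF.ne, ← ENNReal.ofReal_toReal (measure_ne_top μ Set.univ),
    ← ENNReal.ofReal_mul hL, ← ENNReal.ofReal_mul (by positivity),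
    ← ENNReal.ofReal_mul (by positivity),
    ENNReal.ofReal_rpow_of_nonneg (by positivity) (by norm_num)] at hL2
  refine hL2.trans (ENNReal.ofReal_le_ofReal ?_)
  have hRpow : R ^ (((n : ℝ) - α) / 2) = (R ^ ((n : ℝ) - α)) ^ (1 / 2 : ℝ) := by
    rw [← rpow_mul hR.le]
    ring_nf
  rw [hRpow, ← mul_rpow (by positivity) hA, ← mul_rpow (by positivity) (by positivity),
    ← mul_rpow (by positivity) ENNReal.toReal_nonneg,
    ← mul_rpow (by positivity) ENNReal.toReal_nonneg]
  gcongr ?_ ^ _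
  calc N / (N - α) * A * R ^ ((n : ℝ) - α) * f * (L * m)
      = N / (N - α) * A * R ^ ((n : ℝ) - α) * m * f * L := by ring
    _ ≤ N / (N - α) * A * R ^ ((n : ℝ) - α) * m * f * (L + 1) := by gcongr; linarith
    _ = N / (N - α) * (L + 1) * A * R ^ ((n : ℝ) - α) * m * f := by ring

/-- an `L²` bound, `‖R^n ψ(R·) * μ‖_{L²} ≲ A^{1/2} R^{(n-α)/2} μ(ℝⁿ)^{1/2}
[μ]_α^{1/2}`, for rapidly decaying integrable `ψ`; the constant depends only on `n`, `α`,
`N` and `‖ψ‖_{L¹}`. -/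
theorem L2_mollified_measure_bound (n : ℕ) (hn : 1 ≤ n) (α N A : ℝ)
    (hα : 0 < α) (hN : α < N) (hA : 0 < A) (ψ : E n → ℂ) (hmeas : Measurable ψ)
    (hdecay : ∀ y, ‖ψ y‖ ≤ A * (1 + ‖y‖) ^ (-N)) (hint : Integrable ψ) :
    ∃ C : ℝ, 0 < C ∧
      ∀ (μ : Measure (E n)), IsFiniteMeasure μ → frostman μ α < ⊤ →
        ∀ R : ℝ, 0 < R →
          eLpNorm (fun x => ∫ y, ((R : ℂ) ^ (n : ℕ)) * ψ (R • (x - y)) ∂μ) 2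
              (volume : Measure (E n)) ≤
            ENNReal.ofReal (C * A ^ (1/2 : ℝ) * R ^ (((n : ℝ) - α) / 2) *
              (μ Set.univ).toReal ^ (1/2 : ℝ) * (frostman μ α).toReal ^ (1/2 : ℝ)) :=
  L2_mollified_measure_bound_general n α N A hα hN ψ hmeas hdecay hint
end
end

section
/- Let p ≥ 1 and let F : [0,1] → ℂ be continuously differentiable. Then sup_{t ∈ [0,1]} |F(t)|^p ≤ ∫₀¹ |F(τ)|^p dτ + p (∫₀¹ |F(τ)|^p dτ)^{(p−1)/p} (∫₀¹ |F'(τ)|^p dτ)^{1/p}. -/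
/-!
For `p > 1` the function `‖F‖ ^ p` is differentiable with `|(‖F‖ ^ p)'| ≤ p ‖F‖ ^ (p - 1) ‖F'‖`
(for `p = 1` use `|‖F t‖ - ‖F s‖| ≤ ‖F t - F s‖` instead), so `‖F‖ ^ p` oscillates on `[0, 1]` by
at most `J = p ∫₀¹ ‖F‖ ^ (p - 1) ‖F'‖`. Averaging `‖F t‖ ^ p ≤ ‖F s‖ ^ p + J` over `s` and bounding
`J` by Hölder's inequality with exponents `p / (p - 1)` and `p` gives the claim.
-/

open MeasureTheory Real Set

theorem integral_norm_rpow_sub_one_mul_norm_le {α E G : Type*} [MeasurableSpace α]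
    {μ : Measure α} [NormedAddCommGroup E] [NormedAddCommGroup G] {f : α → E} {g : α → G} {p : ℝ}
    (hp : 1 ≤ p)
    (hf : MemLp f (ENNReal.ofReal p) μ) (hg : MemLp g (ENNReal.ofReal p) μ) :
    ∫ x, ‖f x‖ ^ (p - 1) * ‖g x‖ ∂μ ≤
      (∫ x, ‖f x‖ ^ p ∂μ) ^ ((p - 1) / p) * (∫ x, ‖g x‖ ^ p ∂μ) ^ (1 / p) := by
  rcases hp.eq_or_lt with rfl | hp
  · simp
  have hf' : MemLp (fun x ↦ ‖f x‖ ^ (p - 1)) (ENNReal.ofReal (conjExponent p)) μ := by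
    have := hf.norm_rpow_div (ENNReal.ofReal (p - 1))
    rwa [ENNReal.toReal_ofReal (by linarith), ← ENNReal.ofReal_div_of_pos (by linarith)] at this
  have h := integral_mul_le_Lp_mul_Lq_of_nonneg (HolderConjugate.conjExponent hp).symm
    (ae_of_all _ fun _ ↦ by positivity) (ae_of_all _ fun _ ↦ norm_nonneg _) hf' hg.norm
  have hexp : (p - 1) * conjExponent p = p := by
    rw [conjExponent]; field_simp [(by linarith : p - 1 ≠ 0)]
  simp_rw [← rpow_mul (norm_nonneg _), hexp] at h
  convert h using 3
  rw [conjExponent]; field_simp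

theorem ContinuousOn.memLp_restrict_of_isCompact {X E : Type*} [TopologicalSpace X]
    [MeasurableSpace X] [OpensMeasurableSpace X] {μ : Measure X} [IsFiniteMeasureOnCompacts μ]
    [NormedAddCommGroup E] [SecondCountableTopologyEither X E] {f : X → E} {s : Set X}
    (hs : IsCompact s) (hsm : MeasurableSet s) (hf : ContinuousOn f s) (q : ENNReal) :
    MemLp f q (μ.restrict s) := by
  have : IsFiniteMeasure (μ.restrict s) := isFiniteMeasure_restrict.2 hs.measure_lt_top.ne
  obtain ⟨C, hC⟩ := hs.exists_bound_of_continuousOn hf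
  exact .of_bound (hf.aestronglyMeasurable hsm) C ((ae_restrict_iff' hsm).2 (ae_of_all _ hC))

section Calculus

variable {E : Type*} [NormedAddCommGroup E] [InnerProductSpace ℝ E] {F F' : ℝ → E} {a b p : ℝ}

theorem norm_deriv_norm_rpow_le {x : E} {t : ℝ} (hp : 1 < p) (hF : HasDerivAt F x t) :
    ‖deriv (fun s ↦ ‖F s‖ ^ p) t‖ ≤ p * ‖F t‖ ^ (p - 1) * ‖x‖ := by
  change ‖deriv ((fun y : E ↦ ‖y‖ ^ p) ∘ F) t‖ ≤ _
  rw [((hasFDerivAt_norm_rpow (F t) hp).comp_hasDerivAt t hF).deriv,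
    ← fderiv_norm_rpow _ hp, ← norm_fderiv_norm_id_rpow (F t) hp]
  exact ContinuousLinearMap.le_opNorm _ _

theorem continuousOn_mul_norm_rpow_sub_one_mul_norm (hp : 1 ≤ p)
    (hF : ∀ t ∈ Icc a b, HasDerivAt F (F' t) t) (hF' : ContinuousOn F' (Icc a b)) :
    ContinuousOn (fun t ↦ p * ‖F t‖ ^ (p - 1) * ‖F' t‖) (Icc a b) := by
  have hFc : ContinuousOn F (Icc a b) :=
    continuousOn_of_forall_continuousAt fun t ht ↦ (hF t ht).continuousAt
  exact (continuousOn_const.mul (hFc.norm.rpow_const fun _ _ ↦ .inr (by linarith))).mul hF'.norm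

theorem abs_norm_rpow_sub_le_integral (hp : 1 ≤ p) (hab : a ≤ b)
    (hF : ∀ t ∈ Icc a b, HasDerivAt F (F' t) t) (hF' : ContinuousOn F' (Icc a b)) :
    |‖F b‖ ^ p - ‖F a‖ ^ p| ≤ ∫ t in a..b, p * ‖F t‖ ^ (p - 1) * ‖F' t‖ := by
  have hFc : ContinuousOn F (Icc a b) :=
    continuousOn_of_forall_continuousAt fun t ht ↦ (hF t ht).continuousAt
  have hF_Ioo : ∀ t ∈ Ioo a b, HasDerivAt F (F' t) t := fun t ht ↦ hF t (Ioo_subset_Icc_self ht)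
  have hBi : IntervalIntegrable (fun t ↦ p * ‖F t‖ ^ (p - 1) * ‖F' t‖) volume a b :=
    ContinuousOn.intervalIntegrable <| (uIcc_of_le hab).symm ▸
      continuousOn_mul_norm_rpow_sub_one_mul_norm hp hF hF'
  rcases hp.eq_or_lt with rfl | hp
  · calc |‖F b‖ ^ (1 : ℝ) - ‖F a‖ ^ (1 : ℝ)| ≤ ‖F b - F a‖ := by
          simpa using abs_norm_sub_norm_le (F b) (F a)
      _ ≤ _ := norm_sub_le_integral_of_norm_deriv_le_of_le hab hFc
          (fun t ht ↦ (hF_Ioo t ht).differentiableAt.differentiableWithinAt)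
          (ae_of_all _ fun t ht ↦ by simp [(hF_Ioo t ht).deriv]) hBi
  · exact norm_sub_le_integral_of_norm_deriv_le_of_le hab
      (hFc.norm.rpow_const fun _ _ ↦ .inr (by linarith))
      (fun t ht ↦ ((differentiable_norm_rpow hp (F t)).comp t
        (hF_Ioo t ht).differentiableAt).differentiableWithinAt)
      (ae_of_all _ fun t ht ↦ norm_deriv_norm_rpow_le hp (hF_Ioo t ht)) hBi

theorem norm_rpow_le_norm_rpow_add_integral (hp : 1 ≤ p)
    (hF : ∀ t ∈ Icc a b, HasDerivAt F (F' t) t) (hF' : ContinuousOn F' (Icc a b))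
    {s t : ℝ} (hs : s ∈ Icc a b) (ht : t ∈ Icc a b) :
    ‖F t‖ ^ p ≤ ‖F s‖ ^ p + ∫ τ in a..b, p * ‖F τ‖ ^ (p - 1) * ‖F' τ‖ := by
  have bound : ∀ c ∈ Icc a b, ∀ d ∈ Icc a b, c ≤ d →
      |‖F d‖ ^ p - ‖F c‖ ^ p| ≤ ∫ τ in a..b, p * ‖F τ‖ ^ (p - 1) * ‖F' τ‖ := by
    intro c hc d hd hcd
    have hsub : Icc c d ⊆ Icc a b := Icc_subset_Icc hc.1 hd.2
    refine (abs_norm_rpow_sub_le_integral hp hcd (fun τ hτ ↦ hF τ (hsub hτ))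
      (hF'.mono hsub)).trans (intervalIntegral.integral_mono_interval hc.1 hcd hd.2
        (ae_of_all _ fun τ ↦ by positivity) ?_)
    exact ContinuousOn.intervalIntegrable <| (uIcc_of_le (hc.1.trans (hcd.trans hd.2))).symm ▸
      continuousOn_mul_norm_rpow_sub_one_mul_norm hp hF hF'
  rcases le_total s t with hst | hts
  · linarith [le_abs_self (‖F t‖ ^ p - ‖F s‖ ^ p), bound s hs t ht hst]
  · linarith [neg_abs_le (‖F s‖ ^ p - ‖F t‖ ^ p), bound t ht s hs hts]

theorem sub_mul_norm_rpow_le_integral_add (hp : 1 ≤ p) (hab : a ≤ b)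
    (hF : ∀ t ∈ Icc a b, HasDerivAt F (F' t) t) (hF' : ContinuousOn F' (Icc a b))
    {t : ℝ} (ht : t ∈ Icc a b) :
    (b - a) * ‖F t‖ ^ p ≤ (∫ τ in a..b, ‖F τ‖ ^ p) +
      (b - a) * ∫ τ in a..b, p * ‖F τ‖ ^ (p - 1) * ‖F' τ‖ := by
  have hi : IntervalIntegrable (fun τ ↦ ‖F τ‖ ^ p) volume a b :=
    ContinuousOn.intervalIntegrable <| (uIcc_of_le hab).symm ▸
      (continuousOn_of_forall_continuousAt fun t ht ↦ (hF t ht).continuousAt).norm.rpow_const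
        fun _ _ ↦ .inr (by linarith)
  have h := intervalIntegral.integral_mono_on hab intervalIntegrable_const
    (hi.add intervalIntegrable_const)
    fun s hs ↦ norm_rpow_le_norm_rpow_add_integral hp hF hF' hs ht
  simpa [intervalIntegral.integral_add hi intervalIntegrable_const] using h

end Calculus

/-- a Sobolev-type inequality on `[0,1]`, bounding the supremum of `|F|^p` by
`∫₀¹|F|^p + p (∫₀¹|F|^p)^{(p-1)/p} (∫₀¹|F'|^p)^{1/p}` for continuously differentiable `F`. -/
theorem sup_le_integral_plus_derivative (p : ℝ) (hp : 1 ≤ p) (F F' : ℝ → ℂ)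
    (hderiv : ∀ t ∈ Set.Icc (0:ℝ) 1, HasDerivAt F (F' t) t)
    (hcont : ContinuousOn F' (Set.Icc (0:ℝ) 1)) :
    (⨆ t : Set.Icc (0:ℝ) 1, ‖F t‖ ^ p) ≤
      (∫ τ in (0:ℝ)..1, ‖F τ‖ ^ p) +
        p * (∫ τ in (0:ℝ)..1, ‖F τ‖ ^ p) ^ ((p - 1) / p) *
          (∫ τ in (0:ℝ)..1, ‖F' τ‖ ^ p) ^ (1/p) := by
  have : Nonempty (Icc (0 : ℝ) 1) := ⟨⟨0, left_mem_Icc.2 zero_le_one⟩⟩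
  have hFc : ContinuousOn F (Icc 0 1) :=
    continuousOn_of_forall_continuousAt fun t ht ↦ (hderiv t ht).continuousAt
  have holder := integral_norm_rpow_sub_one_mul_norm_le hp
    (hFc.memLp_restrict_of_isCompact (μ := volume) isCompact_Icc measurableSet_Icc _)
    (hcont.memLp_restrict_of_isCompact isCompact_Icc measurableSet_Icc _)
  simp only [integral_Icc_eq_integral_Ioc, ← intervalIntegral.integral_of_le zero_le_one] at holder
  refine ciSup_le fun t ↦ ?_
  have h := sub_mul_norm_rpow_le_integral_add hp zero_le_one hderiv hcont t.2
  simp only [mul_assoc, intervalIntegral.integral_const_mul, sub_zero, one_mul] at h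
  calc ‖F t‖ ^ p ≤ (∫ τ in (0:ℝ)..1, ‖F τ‖ ^ p) +
        p * ∫ τ in (0:ℝ)..1, ‖F τ‖ ^ (p - 1) * ‖F' τ‖ := h
    _ ≤ _ := by rw [mul_assoc]; gcongr
end
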